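/- arXiv:1604.02887 — 6 statements merged into one kernel-verified Lean document; each statement's English description precedes it below -/
import Mathlib

section
/- Let φ be an LRV formula containing the subformula ⟨x ≈ y? ψ⟩, and let x_new, y_new be two distinct variables not occurring in φ. Then φ is satisfiable if and only if G(ψ ⇔ x_new ≈ y_new) ∧ φ[⟨x ≈ y? ψ⟩ ← ⟨x ≈ y? (x_new ≈ y_new)⟩] is satisfiable, where φ[⟨x ≈ y? ψ⟩ ← ⟨x ≈ y? (x_new ≈ y_new)⟩] is the result of replacing every occurrence of ⟨x ≈ y? ψ⟩ in φ by ⟨x ≈ y? (x_new ≈ y_new)⟩. The analogous equivalence holds for a subformula ⟨x ≉ y? ψ⟩, replacing every occurrence of ⟨x ≉ y? ψ⟩ by ⟨x ≉ y? (x_new ≈ y_new)⟩. -/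
/-- Syntax of LRV formulas.  Variables are natural numbers.
`eqX x j y` is the atomic formula `x ≈ X^j y`,
`futEq x y φ` is the future obligation `⟨x ≈ y? φ⟩`,
`futNeq x y φ` is `⟨x ≉ y? φ⟩`;
`untl` is "until" (U), `prev` is `X⁻¹`, `sinc` is "since" (S). -/
inductive LRV : Type
  | eqX : ℕ → ℕ → ℕ → LRV
  | futEq : ℕ → ℕ → LRV → LRV
  | futNeq : ℕ → ℕ → LRV → LRV
  | and : LRV → LRV → LRV
  | not : LRV → LRV
  | next : LRV → LRV
  | untl : LRV → LRV → LRV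
  | prev : LRV → LRV
  | sinc : LRV → LRV → LRV
  deriving DecidableEq

/-- A model is a finite (intended: non-empty) sequence of valuations. -/
abbrev LRVModel := List (ℕ → ℕ)

/-- The valuation of a model at position `i`. -/
def mval (σ : LRVModel) (i : ℕ) : ℕ → ℕ := σ.getD i (fun _ => 0)

/-- Satisfaction relation `σ, i ⊨ φ` for LRV over finite models. -/
def LRVSat (σ : LRVModel) : LRV → ℕ → Prop
  | .eqX x j y, i => i + j < σ.length ∧ mval σ i x = mval σ (i + j) y
  | .futEq x y φ, i => ∃ j, i < j ∧ j < σ.length ∧ mval σ i x = mval σ j y ∧ LRVSat σ φ j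
  | .futNeq x y φ, i => ∃ j, i < j ∧ j < σ.length ∧ mval σ i x ≠ mval σ j y ∧ LRVSat σ φ j
  | .and φ ψ, i => LRVSat σ φ i ∧ LRVSat σ ψ i
  | .not φ, i => ¬ LRVSat σ φ i
  | .next φ, i => i + 1 < σ.length ∧ LRVSat σ φ (i + 1)
  | .untl φ ψ, i => ∃ j, i ≤ j ∧ j < σ.length ∧ LRVSat σ ψ j ∧ ∀ l, i ≤ l → l < j → LRVSat σ φ l
  | .prev φ, i => 0 < i ∧ LRVSat σ φ (i - 1)
  | .sinc φ ψ, i => ∃ j, j ≤ i ∧ LRVSat σ ψ j ∧ ∀ l, j < l → l ≤ i → LRVSat σ φ l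

/-- Satisfiability: truth at position 0 in some non-empty model. -/
def LRVSatisfiable (φ : LRV) : Prop := ∃ σ : LRVModel, σ ≠ [] ∧ LRVSat σ φ 0

/-- ⊤ (true at every position of a model). -/
def LRV.top : LRV := .eqX 0 0 0

/-- Disjunction (derived). -/
def LRV.lor (φ ψ : LRV) : LRV := .not (.and (.not φ) (.not ψ))

/-- Implication (derived). -/
def LRV.limp (φ ψ : LRV) : LRV := LRV.lor (.not φ) ψ

/-- Bi-implication (derived). -/
def LRV.liff (φ ψ : LRV) : LRV := .and (LRV.limp φ ψ) (LRV.limp ψ φ)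

/-- F (eventually, at the current or a later position). -/
def LRV.evF (φ : LRV) : LRV := .untl LRV.top φ

/-- G (always, from the current position on). -/
def LRV.alG (φ : LRV) : LRV := .not (LRV.evF (.not φ))

/-- Iterated next `X^n`. -/
def LRV.nextn : ℕ → LRV → LRV
  | 0, φ => φ
  | n + 1, φ => .next (LRV.nextn n φ)

/-- Iterated previous `(X⁻¹)^n`. -/
def LRV.prevn : ℕ → LRV → LRV
  | 0, φ => φ
  | n + 1, φ => .prev (LRV.prevn n φ)

/-- `x ≉ X^j y`, i.e. `¬(x ≈ X^j y) ∧ X^j ⊤`. -/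
def LRV.neqX (x j y : ℕ) : LRV := .and (.not (.eqX x j y)) (LRV.nextn j LRV.top)

/-- Finite conjunction. -/
def lrvBigAnd (l : List LRV) : LRV := l.foldr .and LRV.top

/-- Finite disjunction. -/
def lrvBigOr (l : List LRV) : LRV := l.foldr LRV.lor (.not LRV.top)

/-- The finite set of variables occurring in a formula. -/
def LRV.vars : LRV → Finset ℕ
  | .eqX x _ y => {x, y}
  | .futEq x y ψ => insert x (insert y ψ.vars)
  | .futNeq x y ψ => insert x (insert y ψ.vars)
  | .and a b => a.vars ∪ b.vars
  | .not a => a.vars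
  | .next a => a.vars
  | .untl a b => a.vars ∪ b.vars
  | .prev a => a.vars
  | .sinc a b => a.vars ∪ b.vars

/-- The list of all subformulas of a formula (including itself, and including
subformulas occurring inside the tests of obligations). -/
def LRV.subfs : LRV → List LRV
  | .eqX x j y => [.eqX x j y]
  | .futEq x y ψ => .futEq x y ψ :: ψ.subfs
  | .futNeq x y ψ => .futNeq x y ψ :: ψ.subfs
  | .and a b => .and a b :: (a.subfs ++ b.subfs)
  | .not a => .not a :: a.subfs
  | .next a => .next a :: a.subfs
  | .untl a b => .untl a b :: (a.subfs ++ b.subfs)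
  | .prev a => .prev a :: a.subfs
  | .sinc a b => .sinc a b :: (a.subfs ++ b.subfs)

/-- The tests of a formula: all ψ such that `⟨x ≈ y? ψ⟩` or `⟨x ≉ y? ψ⟩` occurs in it. -/
def LRV.tests : LRV → List LRV
  | .eqX _ _ _ => []
  | .futEq _ _ ψ => ψ :: ψ.tests
  | .futNeq _ _ ψ => ψ :: ψ.tests
  | .and a b => a.tests ++ b.tests
  | .not a => a.tests
  | .next a => a.tests
  | .untl a b => a.tests ++ b.tests
  | .prev a => a.tests
  | .sinc a b => a.tests ++ b.tests

/-- A formula contains no obligations `⟨· ≈ ·? ·⟩` or `⟨· ≉ ·? ·⟩`. -/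
def LRV.obligFree : LRV → Prop
  | .eqX _ _ _ => True
  | .futEq _ _ _ => False
  | .futNeq _ _ _ => False
  | .and a b => a.obligFree ∧ b.obligFree
  | .not a => a.obligFree
  | .next a => a.obligFree
  | .untl a b => a.obligFree ∧ b.obligFree
  | .prev a => a.obligFree
  | .sinc a b => a.obligFree ∧ b.obligFree

/-- Replace every occurrence of the subformula `τ` by `ρ` (top-down). -/
def LRV.replace (τ ρ : LRV) : LRV → LRV
  | .eqX x j y => if LRV.eqX x j y = τ then ρ else .eqX x j y
  | .futEq x y ψ => if LRV.futEq x y ψ = τ then ρ else .futEq x y (LRV.replace τ ρ ψ)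
  | .futNeq x y ψ => if LRV.futNeq x y ψ = τ then ρ else .futNeq x y (LRV.replace τ ρ ψ)
  | .and a b => if LRV.and a b = τ then ρ else .and (LRV.replace τ ρ a) (LRV.replace τ ρ b)
  | .not a => if LRV.not a = τ then ρ else .not (LRV.replace τ ρ a)
  | .next a => if LRV.next a = τ then ρ else .next (LRV.replace τ ρ a)
  | .untl a b => if LRV.untl a b = τ then ρ else .untl (LRV.replace τ ρ a) (LRV.replace τ ρ b)
  | .prev a => if LRV.prev a = τ then ρ else .prev (LRV.replace τ ρ a)
  | .sinc a b => if LRV.sinc a b = τ then ρ else .sinc (LRV.replace τ ρ a) (LRV.replace τ ρ b)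

lemma lrv_sat_congr (σ σ' : LRVModel) (hlen : σ.length = σ'.length) :
    ∀ φ : LRV, (∀ i v, v ∈ φ.vars → mval σ i v = mval σ' i v) →
    ∀ i, LRVSat σ φ i ↔ LRVSat σ' φ i := by
  intro φ
  induction φ with
  | eqX x j y =>
    intro hv i
    simp only [LRVSat, hlen, hv i x (by simp [LRV.vars]), hv (i + j) y (by simp [LRV.vars])]
  | futEq x y ψ ih =>
    intro hv i
    have hψ := ih (fun i v h => hv i v (by simp [LRV.vars]; tauto))
    simp only [LRVSat, hlen, fun i => hv i x (by simp [LRV.vars]),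
      fun i => hv i y (by simp [LRV.vars]), hψ]
  | futNeq x y ψ ih =>
    intro hv i
    have hψ := ih (fun i v h => hv i v (by simp [LRV.vars]; tauto))
    simp only [LRVSat, hlen, fun i => hv i x (by simp [LRV.vars]),
      fun i => hv i y (by simp [LRV.vars]), hψ]
  | and a b iha ihb =>
    intro hv i
    have ha := iha (fun i v h => hv i v (by simp [LRV.vars]; tauto))
    have hb := ihb (fun i v h => hv i v (by simp [LRV.vars]; tauto))
    simp only [LRVSat, ha, hb]
  | not a ih =>
    intro hv i
    have ha := ih (fun i v h => hv i v (by simp [LRV.vars]; tauto))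
    simp only [LRVSat, ha]
  | next a ih =>
    intro hv i
    have ha := ih (fun i v h => hv i v (by simp [LRV.vars]; tauto))
    simp only [LRVSat, hlen, ha]
  | untl a b iha ihb =>
    intro hv i
    have ha := iha (fun i v h => hv i v (by simp [LRV.vars]; tauto))
    have hb := ihb (fun i v h => hv i v (by simp [LRV.vars]; tauto))
    simp only [LRVSat, hlen, ha, hb]
  | prev a ih =>
    intro hv i
    have ha := ih (fun i v h => hv i v (by simp [LRV.vars]; tauto))
    simp only [LRVSat, ha]
  | sinc a b iha ihb =>
    intro hv i
    have ha := iha (fun i v h => hv i v (by simp [LRV.vars]; tauto))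
    have hb := ihb (fun i v h => hv i v (by simp [LRV.vars]; tauto))
    simp only [LRVSat, hlen, ha, hb]

lemma lrv_subfs_vars : ∀ φ τ : LRV, τ ∈ φ.subfs → τ.vars ⊆ φ.vars := by
  intro φ
  induction φ with
  | eqX x j y =>
    intro τ h; simp [LRV.subfs] at h; subst h; exact subset_rfl
  | futEq x y ψ ih =>
    intro τ h; simp [LRV.subfs] at h
    rcases h with h | h
    · subst h; exact subset_rfl
    · exact (ih τ h).trans (fun v hv => by simp [LRV.vars]; tauto)
  | futNeq x y ψ ih =>
    intro τ h; simp [LRV.subfs] at h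
    rcases h with h | h
    · subst h; exact subset_rfl
    · exact (ih τ h).trans (fun v hv => by simp [LRV.vars]; tauto)
  | and a b iha ihb =>
    intro τ h; simp [LRV.subfs] at h
    rcases h with h | h | h
    · subst h; exact subset_rfl
    · exact (iha τ h).trans (fun v hv => by simp [LRV.vars]; tauto)
    · exact (ihb τ h).trans (fun v hv => by simp [LRV.vars]; tauto)
  | not a ih =>
    intro τ h; simp [LRV.subfs] at h
    rcases h with h | h
    · subst h; exact subset_rfl
    · exact (ih τ h).trans (fun v hv => by simp [LRV.vars]; tauto)
  | next a ih =>
    intro τ h; simp [LRV.subfs] at h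
    rcases h with h | h
    · subst h; exact subset_rfl
    · exact (ih τ h).trans (fun v hv => by simp [LRV.vars]; tauto)
  | untl a b iha ihb =>
    intro τ h; simp [LRV.subfs] at h
    rcases h with h | h | h
    · subst h; exact subset_rfl
    · exact (iha τ h).trans (fun v hv => by simp [LRV.vars]; tauto)
    · exact (ihb τ h).trans (fun v hv => by simp [LRV.vars]; tauto)
  | prev a ih =>
    intro τ h; simp [LRV.subfs] at h
    rcases h with h | h
    · subst h; exact subset_rfl
    · exact (ih τ h).trans (fun v hv => by simp [LRV.vars]; tauto)
  | sinc a b iha ihb =>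
    intro τ h; simp [LRV.subfs] at h
    rcases h with h | h | h
    · subst h; exact subset_rfl
    · exact (iha τ h).trans (fun v hv => by simp [LRV.vars]; tauto)
    · exact (ihb τ h).trans (fun v hv => by simp [LRV.vars]; tauto)

lemma lrv_replace_sat (σ : LRVModel) (τ ρ : LRV)
    (h : ∀ i, LRVSat σ ρ i ↔ LRVSat σ τ i) :
    ∀ χ : LRV, ∀ i, LRVSat σ (LRV.replace τ ρ χ) i ↔ LRVSat σ χ i := by
  intro χ
  induction χ with
  | eqX x j y =>
    intro i; simp only [LRV.replace]; split
    · next heq => rw [heq]; exact h i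
    · exact Iff.rfl
  | futEq x y ψ ih =>
    intro i; simp only [LRV.replace]; split
    · next heq => rw [heq]; exact h i
    · simp only [LRVSat, ih]
  | futNeq x y ψ ih =>
    intro i; simp only [LRV.replace]; split
    · next heq => rw [heq]; exact h i
    · simp only [LRVSat, ih]
  | and a b iha ihb =>
    intro i; simp only [LRV.replace]; split
    · next heq => rw [heq]; exact h i
    · simp only [LRVSat, iha, ihb]
  | not a ih =>
    intro i; simp only [LRV.replace]; split
    · next heq => rw [heq]; exact h i
    · simp only [LRVSat, ih]
  | next a ih =>
    intro i; simp only [LRV.replace]; split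
    · next heq => rw [heq]; exact h i
    · simp only [LRVSat, ih]
  | untl a b iha ihb =>
    intro i; simp only [LRV.replace]; split
    · next heq => rw [heq]; exact h i
    · simp only [LRVSat, iha, ihb]
  | prev a ih =>
    intro i; simp only [LRV.replace]; split
    · next heq => rw [heq]; exact h i
    · simp only [LRVSat, ih]
  | sinc a b iha ihb =>
    intro i; simp only [LRV.replace]; split
    · next heq => rw [heq]; exact h i
    · simp only [LRVSat, iha, ihb]

lemma lrv_satG (σ : LRVModel) (χ : LRV) (i : ℕ) :
    LRVSat σ (LRV.alG χ) i ↔ ∀ j, i ≤ j → j < σ.length → LRVSat σ χ j := by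
  simp only [LRV.alG, LRV.evF, LRV.top, LRVSat]
  constructor
  · intro h j hij hj
    by_contra hc
    exact h ⟨j, hij, hj, hc, fun l _ hl => ⟨by omega, rfl⟩⟩
  · rintro h ⟨j, hij, hj, hc, _⟩
    exact hc (h j hij hj)

lemma lrv_satIff (σ : LRVModel) (a b : LRV) (i : ℕ) :
    LRVSat σ (LRV.liff a b) i ↔ (LRVSat σ a i ↔ LRVSat σ b i) := by
  simp only [LRV.liff, LRV.limp, LRV.lor, LRVSat]
  tauto

lemma lrv_mval_map (n : ℕ) (f : ℕ → ℕ → ℕ) (i : ℕ) :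
    mval ((List.range n).map f) i = if i < n then f i else (fun _ => 0) := by
  unfold mval
  rcases lt_or_ge i n with h | h
  · rw [if_pos h, List.getD_eq_getElem _ _ (by simpa using h)]
    simp
  · rw [if_neg (by omega), List.getD_eq_default _ _ (by simpa using h)]

lemma lrv_mval_default (σ : LRVModel) (i : ℕ) (h : σ.length ≤ i) :
    mval σ i = fun _ => 0 :=
  List.getD_eq_default _ _ h

open Classical in
lemma lrv_key (φ ψ : LRV) (xnew ynew : ℕ) (hne : xnew ≠ ynew)
    (hx : xnew ∉ φ.vars) (hy : ynew ∉ φ.vars) (hψv : ψ.vars ⊆ φ.vars)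
    (τ ρ : LRV)
    (hτρ : ∀ σ : LRVModel,
      (∀ j, j < σ.length → (LRVSat σ ψ j ↔ LRVSat σ (.eqX xnew 0 ynew) j)) →
      ∀ i, LRVSat σ ρ i ↔ LRVSat σ τ i) :
    LRVSatisfiable φ ↔
      LRVSatisfiable (.and (LRV.alG (LRV.liff ψ (.eqX xnew 0 ynew))) (LRV.replace τ ρ φ)) := by
  constructor
  · rintro ⟨σ, hσne, hσ⟩
    set f : ℕ → ℕ → ℕ := fun i v =>
      if v = xnew then 0
      else if v = ynew then (if LRVSat σ ψ i then 0 else 1)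
      else mval σ i v with hf
    set σ' : LRVModel := (List.range σ.length).map f with hσ'
    have hlen : σ.length = σ'.length := by simp [hσ']
    have hmv : ∀ i v, v ≠ xnew → v ≠ ynew → mval σ' i v = mval σ i v := by
      intro i v h1 h2
      rw [hσ', lrv_mval_map]
      split
      · simp [hf, h1, h2]
      · rw [lrv_mval_default σ i (by omega)]
    have hagree : ∀ χ : LRV, χ.vars ⊆ φ.vars → ∀ i, LRVSat σ χ i ↔ LRVSat σ' χ i :=
      fun χ hχ => lrv_sat_congr σ σ' hlen χ
        (fun i v hv => (hmv i v (by rintro rfl; exact hx (hχ hv))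
          (by rintro rfl; exact hy (hχ hv))).symm)
    have hG : ∀ j, j < σ'.length → (LRVSat σ' ψ j ↔ LRVSat σ' (.eqX xnew 0 ynew) j) := by
      intro j hj
      have hj' : j < σ.length := by omega
      rw [← hagree ψ hψv j]
      simp only [LRVSat, hσ', lrv_mval_map, Nat.add_zero, if_pos hj']
      by_cases h : LRVSat σ ψ j
      · simp [hf, h, hne, Ne.symm hne]
        omega
      · simp [hf, h, hne, Ne.symm hne]
    refine ⟨σ', ?_, ?_, ?_⟩
    · rw [hσ']
      simp only [ne_eq, List.map_eq_nil_iff, List.range_eq_nil]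
      intro h
      exact hσne (List.length_eq_zero_iff.mp h)
    · rw [lrv_satG]
      intro j _ hj
      rw [lrv_satIff]
      exact hG j hj
    · exact (lrv_replace_sat σ' τ ρ (hτρ σ' hG) φ 0).mpr ((hagree φ subset_rfl 0).mp hσ)
  · rintro ⟨σ', hne', hGpart, hrep⟩
    have hG : ∀ j, j < σ'.length → (LRVSat σ' ψ j ↔ LRVSat σ' (.eqX xnew 0 ynew) j) := by
      intro j hj
      have := (lrv_satG σ' _ 0).mp hGpart j (Nat.zero_le j) hj
      rwa [lrv_satIff] at this
    exact ⟨σ', hne', (lrv_replace_sat σ' τ ρ (hτρ σ' hG) φ 0).mp hrep⟩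

/-- Let φ contain the subformula `⟨x ≈ y? ψ⟩` and let `x_new, y_new` be two
distinct variables not occurring in φ.  Then φ is satisfiable iff
`G(ψ ⇔ x_new ≈ y_new) ∧ φ[⟨x ≈ y? ψ⟩ ← ⟨x ≈ y? (x_new ≈ y_new)⟩]` is satisfiable;
and the analogous equivalence holds for a subformula `⟨x ≉ y? ψ⟩`. -/
theorem lrv_no_nesting_reduction (φ ψ : LRV) (x y xnew ynew : ℕ)
    (hne : xnew ≠ ynew) (hx : xnew ∉ φ.vars) (hy : ynew ∉ φ.vars) :
    ((LRV.futEq x y ψ ∈ φ.subfs) →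
      (LRVSatisfiable φ ↔
        LRVSatisfiable (.and (LRV.alG (LRV.liff ψ (.eqX xnew 0 ynew)))
          (LRV.replace (.futEq x y ψ) (.futEq x y (.eqX xnew 0 ynew)) φ)))) ∧
    ((LRV.futNeq x y ψ ∈ φ.subfs) →
      (LRVSatisfiable φ ↔
        LRVSatisfiable (.and (LRV.alG (LRV.liff ψ (.eqX xnew 0 ynew)))
          (LRV.replace (.futNeq x y ψ) (.futNeq x y (.eqX xnew 0 ynew)) φ)))) := by
  have hsub : ψ.vars ⊆ LRV.vars (LRV.futEq x y ψ) :=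
    (Finset.subset_insert y ψ.vars).trans (Finset.subset_insert x _)
  constructor
  · intro hmem
    exact lrv_key φ ψ xnew ynew hne hx hy (hsub.trans (lrv_subfs_vars φ _ hmem)) _ _
      (by
        intro σ'' hG i
        simp only [LRVSat]
        apply exists_congr
        intro j
        constructor <;> rintro ⟨h1, h2, h3, h4⟩
        · exact ⟨h1, h2, h3, (hG j h2).mpr h4⟩
        · exact ⟨h1, h2, h3, (hG j h2).mp h4⟩)
  · intro hmem
    have hsub' : ψ.vars ⊆ LRV.vars (LRV.futNeq x y ψ) :=
      (Finset.subset_insert y ψ.vars).trans (Finset.subset_insert x _)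
    exact lrv_key φ ψ xnew ynew hne hx hy (hsub'.trans (lrv_subfs_vars φ _ hmem)) _ _
      (by
        intro σ'' hG i
        simp only [LRVSat]
        apply exists_congr
        intro j
        constructor <;> rintro ⟨h1, h2, h3, h4⟩
        · exact ⟨h1, h2, h3, (hG j h2).mpr h4⟩
        · exact ⟨h1, h2, h3, (hG j h2).mp h4⟩)
end

section
/- Let φ be an LRV formula containing no subformula of the form ⟨x ≉ y? ψ⟩, and such that no test subformula ψ occurring in an obligation ⟨x ≈ y? ψ⟩ of φ itself contains an obligation. Fix pairwise distinct fresh variables k and v_{y,ψ} (for each variable y of φ and test ψ of φ), all not occurring in φ. Let const = G((k ≈ X k ∨ ¬X⊤) ∧ ⋀_{x ∈ vars(φ)} k ≉ x); for each y, ψ let val_{y,ψ} = G(v_{y,ψ} ≈ k ∨ v_{y,ψ} ≈ y) ∧ G(v_{y,ψ} ≈ y ⇔ ψ); and let φ^⊤ be the result of replacing in φ every occurrence of ⟨x ≈ y? ψ⟩ by ⟨x ≈ v_{y,ψ}? ⊤⟩. Then φ is satisfiable if and only if φ' = φ^⊤ ∧ const ∧ ⋀_{y,ψ} val_{y,ψ}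 is satisfiable; moreover in φ' every obligation has test ⊤. -/
/-- A formula contains no subformula of the form `⟨· ≉ ·? ·⟩`. -/
def LRV.futNeqFree : LRV → Prop
  | .eqX _ _ _ => True
  | .futEq _ _ ψ => ψ.futNeqFree
  | .futNeq _ _ _ => False
  | .and a b => a.futNeqFree ∧ b.futNeqFree
  | .not a => a.futNeqFree
  | .next a => a.futNeqFree
  | .untl a b => a.futNeqFree ∧ b.futNeqFree
  | .prev a => a.futNeqFree
  | .sinc a b => a.futNeqFree ∧ b.futNeqFree

/-- Every obligation occurring in the formula has test `⊤`. -/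
def LRV.obligTop : LRV → Prop
  | .eqX _ _ _ => True
  | .futEq _ _ ψ => ψ = LRV.top
  | .futNeq _ _ ψ => ψ = LRV.top
  | .and a b => a.obligTop ∧ b.obligTop
  | .not a => a.obligTop
  | .next a => a.obligTop
  | .untl a b => a.obligTop ∧ b.obligTop
  | .prev a => a.obligTop
  | .sinc a b => a.obligTop ∧ b.obligTop

/-- `const = G((k ≈ X k ∨ ¬X⊤) ∧ ⋀_{x ∈ vars(φ)} k ≉ x)`:
the variable `k` acts as a constant different from all variables of φ. -/
noncomputable def constF (k : ℕ) (φ : LRV) : LRV :=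
  LRV.alG (.and
    (LRV.lor (.eqX k 1 k) (.not (.next LRV.top)))
    (lrvBigAnd ((φ.vars.sort (· ≤ ·)).map (fun x => LRV.neqX k 0 x))))

/-- `val_{y,ψ} = G(v_{y,ψ} ≈ k ∨ v_{y,ψ} ≈ y) ∧ G(v_{y,ψ} ≈ y ⇔ ψ)`. -/
def valTop (k : ℕ) (v : ℕ → LRV → ℕ) (y : ℕ) (ψ : LRV) : LRV :=
  .and (LRV.alG (LRV.lor (.eqX (v y ψ) 0 k) (.eqX (v y ψ) 0 y)))
       (LRV.alG (LRV.liff (.eqX (v y ψ) 0 y) ψ))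

/-- `φ^⊤`: replace every occurrence of `⟨x ≈ y? ψ⟩` by `⟨x ≈ v_{y,ψ}? ⊤⟩`. -/
def trTop (v : ℕ → LRV → ℕ) : LRV → LRV
  | .eqX x j y => .eqX x j y
  | .futEq x y ψ => .futEq x (v y ψ) LRV.top
  | .futNeq x y ψ => .futNeq x y ψ
  | .and a b => .and (trTop v a) (trTop v b)
  | .not a => .not (trTop v a)
  | .next a => .next (trTop v a)
  | .untl a b => .untl (trTop v a) (trTop v b)
  | .prev a => .prev (trTop v a)
  | .sinc a b => .sinc (trTop v a) (trTop v b)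

/-- The full translation `φ' = φ^⊤ ∧ const ∧ ⋀_{y,ψ} val_{y,ψ}`,
where `y` ranges over the variables of φ and `ψ` over the tests of φ. -/
noncomputable def trTopFull (k : ℕ) (v : ℕ → LRV → ℕ) (φ : LRV) : LRV :=
  .and (trTop v φ)
    (.and (constF k φ)
      (lrvBigAnd ((φ.vars.sort (· ≤ ·)).flatMap
        (fun y => φ.tests.dedup.map (fun ψ => valTop k v y ψ)))))

/-!
In a model of φ choose a value `C` that no variable of φ ever takes, let `k` hold `C` everywhere
and let `v_{y,ψ}` hold the value of `y` where `ψ` holds and `C` elsewhere. Since `x` never takes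
the value `C`, a position `j` with `σ(i)(x) = σ(j)(v_{y,ψ})` is then exactly a position with
`σ(i)(x) = σ(j)(y)` at which `ψ` holds, so `⟨x ≈ v_{y,ψ}? ⊤⟩` and `⟨x ≈ y? ψ⟩` agree. Conversely,
`const` and the `val_{y,ψ}` force every model of φ' to have this shape, and the same equivalence
turns φ^⊤ back into φ.
-/

section DerivedOperators

variable {σ : LRVModel} {i : ℕ}

theorem lrvSat_top : LRVSat σ LRV.top i ↔ i < σ.length := by
  simp [LRVSat, LRV.top]

theorem lrvSat_lor {a b : LRV} : LRVSat σ (LRV.lor a b) i ↔ LRVSat σ a i ∨ LRVSat σ b i := by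
  simp only [LRV.lor, LRVSat]
  tauto

theorem lrvSat_liff {a b : LRV} :
    LRVSat σ (LRV.liff a b) i ↔ (LRVSat σ a i ↔ LRVSat σ b i) := by
  simp only [LRV.liff, LRV.limp, lrvSat_lor, LRVSat]
  tauto

theorem lrvSat_alG {a : LRV} :
    LRVSat σ (LRV.alG a) i ↔ ∀ j, i ≤ j → j < σ.length → LRVSat σ a j := by
  simp only [LRV.alG, LRV.evF, LRVSat, lrvSat_top, not_exists, not_and]
  exact forall₂_congr fun j hij =>
    ⟨fun h hj => by_contra fun ha => h hj ha fun l _ hl => hl.trans hj,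
     fun h hj ha _ => ha (h hj)⟩

theorem lrvSat_lrvBigAnd {l : List LRV} :
    LRVSat σ (lrvBigAnd l) i ↔ i < σ.length ∧ ∀ ψ ∈ l, LRVSat σ ψ i := by
  induction l with
  | nil => simp [lrvBigAnd, lrvSat_top]
  | cons a l ih =>
    simp only [lrvBigAnd, List.foldr_cons, LRVSat] at ih ⊢
    rw [ih, List.forall_mem_cons]
    tauto

theorem lrvSat_neqX_zero {x y : ℕ} :
    LRVSat σ (LRV.neqX x 0 y) i ↔ i < σ.length ∧ mval σ i x ≠ mval σ i y := by
  simp only [LRV.neqX, LRV.nextn, LRVSat, lrvSat_top, add_zero]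
  tauto

end DerivedOperators

theorem LRV.vars_subset_of_mem_tests {φ ψ : LRV} (h : ψ ∈ φ.tests) : ψ.vars ⊆ φ.vars := by
  induction φ with
  | eqX => simp [LRV.tests] at h
  | futEq x y χ ih | futNeq x y χ ih =>
    have hsub : χ.vars ⊆ insert x (insert y χ.vars) :=
      (Finset.subset_insert _ _).trans (Finset.subset_insert _ _)
    simp only [LRV.tests, List.mem_cons] at h
    rcases h with rfl | h
    exacts [hsub, (ih h).trans hsub]
  | not a ih | next a ih | prev a ih => exact ih h
  | and a b iha ihb | untl a b iha ihb | sinc a b iha ihb =>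
    simp only [LRV.tests, List.mem_append] at h
    rcases h with h | h
    · exact (iha h).trans Finset.subset_union_left
    · exact (ihb h).trans Finset.subset_union_right

theorem LRV.obligFree.obligTop {φ : LRV} (h : φ.obligFree) : φ.obligTop := by
  induction φ with
  | eqX => trivial
  | futEq | futNeq => exact h.elim
  | not _ ih | next _ ih | prev _ ih => exact ih h
  | and _ _ iha ihb | untl _ _ iha ihb | sinc _ _ iha ihb => exact ⟨iha h.1, ihb h.2⟩

theorem obligTop_trTop (v : ℕ → LRV → ℕ) {φ : LRV} (h : φ.futNeqFree) : (trTop v φ).obligTop := by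
  induction φ with
  | eqX | futEq => trivial
  | futNeq => exact h.elim
  | not _ ih | next _ ih | prev _ ih => exact ih h
  | and _ _ iha ihb | untl _ _ iha ihb | sinc _ _ iha ihb => exact ⟨iha h.1, ihb h.2⟩

theorem obligTop_lrvBigAnd {l : List LRV} (h : ∀ ψ ∈ l, ψ.obligTop) : (lrvBigAnd l).obligTop := by
  induction l with
  | nil => trivial
  | cons a l ih => exact ⟨h a List.mem_cons_self, ih fun ψ hψ => h ψ (List.mem_cons_of_mem a hψ)⟩

theorem obligTop_constF (k : ℕ) (φ : LRV) : (constF k φ).obligTop :=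
  ⟨trivial, ⟨trivial, trivial⟩, obligTop_lrvBigAnd <| by simpa using fun _ _ => ⟨trivial, trivial⟩⟩

theorem obligTop_valTop (k : ℕ) (v : ℕ → LRV → ℕ) (y : ℕ) {ψ : LRV} (h : ψ.obligTop) :
    (valTop k v y ψ).obligTop :=
  ⟨⟨trivial, trivial, trivial⟩, trivial, ⟨trivial, h⟩, h, trivial⟩

theorem obligTop_trTopFull (k : ℕ) (v : ℕ → LRV → ℕ) {φ : LRV} (hφ : φ.futNeqFree)
    (htests : ∀ ψ ∈ φ.tests, ψ.obligFree) : (trTopFull k v φ).obligTop := by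
  refine ⟨obligTop_trTop v hφ, obligTop_constF k φ, obligTop_lrvBigAnd ?_⟩
  simp only [List.mem_flatMap, List.mem_map, List.mem_dedup]
  rintro _ ⟨y, -, ψ, hψ, rfl⟩
  exact obligTop_valTop k v y (htests ψ hψ).obligTop

theorem lrvSat_congr {σ σ' : LRVModel} (hlen : σ.length = σ'.length) {χ : LRV}
    (hval : ∀ i < σ.length, ∀ x ∈ χ.vars, mval σ i x = mval σ' i x) (i : ℕ) :
    LRVSat σ χ i ↔ LRVSat σ' χ i := by
  induction χ generalizing i with
  | eqX x j y =>
    simp only [LRVSat, ← hlen]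
    exact and_congr_right fun h => by
      rw [hval i (by omega) x (by simp [LRV.vars]), hval _ h y (by simp [LRV.vars])]
  | futEq x y ψ ih | futNeq x y ψ ih =>
    have hψ := ih fun i hi z hz => hval i hi z (by simp [LRV.vars, hz])
    simp only [LRVSat, ← hlen, hψ]
    refine exists_congr fun j => and_congr_right fun hij => and_congr_right fun hj => ?_
    rw [hval i (hij.trans hj) x (by simp [LRV.vars]), hval j hj y (by simp [LRV.vars])]
  | not a ih | next a ih | prev a ih => simp only [LRVSat, ← hlen, ih hval]
  | and a b iha ihb | untl a b iha ihb | sinc a b iha ihb =>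
    simp only [LRVSat, ← hlen,
      iha fun i hi z hz => hval i hi z (Finset.mem_union_left _ hz),
      ihb fun i hi z hz => hval i hi z (Finset.mem_union_right _ hz)]

theorem forall_lt_eq_zero_iff_eq_succ {α : Type*} {f : ℕ → α} {n : ℕ} :
    (∀ i < n, f i = f 0) ↔ ∀ i, i + 1 < n → f i = f (i + 1) := by
  refine ⟨fun h i hi => (h i (by omega)).trans (h (i + 1) hi).symm, fun h i hi => ?_⟩
  induction i with
  | zero => rfl
  | succ i ih => exact (h i hi).symm.trans (ih (by omega))

section Semantics

variable {σ : LRVModel} {k : ℕ} {v : ℕ → LRV → ℕ}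

theorem lrvSat_constF_zero {φ : LRV} :
    LRVSat σ (constF k φ) 0 ↔ (∀ i < σ.length, mval σ i k = mval σ 0 k) ∧
      ∀ i < σ.length, ∀ x ∈ φ.vars, mval σ i k ≠ mval σ i x := by
  simp only [constF, lrvSat_alG, LRVSat, lrvSat_lor, lrvSat_lrvBigAnd, lrvSat_top, List.mem_map,
    Finset.mem_sort, forall_exists_index, and_imp, forall_apply_eq_imp_iff₂, lrvSat_neqX_zero,
    forall_lt_eq_zero_iff_eq_succ (f := fun i => mval σ i k), zero_le, true_implies, and_self]
  constructor
  · intro h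
    exact ⟨fun i hi => ((h i (by omega)).1.resolve_right (not_not.mpr hi)).2,
      fun i hi x hx => ((h i hi).2.2 x hx).2⟩
  · rintro ⟨hstep, hne⟩ i hi
    refine ⟨?_, hi, fun x hx => ⟨hi, hne i hi x hx⟩⟩
    by_cases hi' : i + 1 < σ.length
    exacts [Or.inl ⟨hi', hstep i hi'⟩, Or.inr hi']

theorem lrvSat_valTop_zero {y : ℕ} {ψ : LRV} :
    LRVSat σ (valTop k v y ψ) 0 ↔ ∀ i < σ.length,
      (mval σ i (v y ψ) = mval σ i k ∨ mval σ i (v y ψ) = mval σ i y) ∧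
      (mval σ i (v y ψ) = mval σ i y ↔ LRVSat σ ψ i) := by
  simp only [valTop, LRVSat, lrvSat_alG, lrvSat_lor, lrvSat_liff, add_zero, zero_le,
    true_implies, ← forall₂_and]
  refine forall₂_congr fun i hi => ?_
  simp only [hi, true_and]

theorem lrvSat_lrvBigAnd_valTop_zero (hσ : σ ≠ []) {φ : LRV} :
    LRVSat σ (lrvBigAnd ((φ.vars.sort (· ≤ ·)).flatMap
        (fun y => φ.tests.dedup.map (fun ψ => valTop k v y ψ)))) 0 ↔
      ∀ y ∈ φ.vars, ∀ ψ ∈ φ.tests, LRVSat σ (valTop k v y ψ) 0 := by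
  simp only [lrvSat_lrvBigAnd, List.length_pos_iff.mpr hσ, true_and, List.mem_flatMap,
    List.mem_map, Finset.mem_sort, List.mem_dedup]
  exact ⟨fun h y hy ψ hψ => h _ ⟨y, hy, ψ, hψ, rfl⟩, fun h _ ⟨y, hy, ψ, hψ, hχ⟩ => hχ ▸ h y hy ψ hψ⟩

end Semantics

/-- The shape that `const` and the `val_{y,ψ}` impose on a model, for `y ∈ S` and `ψ ∈ T`. -/
structure TestEncoding (σ : LRVModel) (k : ℕ) (v : ℕ → LRV → ℕ) (S : Finset ℕ) (T : List LRV) :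
    Prop where
  const : ∀ i < σ.length, mval σ i k = mval σ 0 k
  ne_vars : ∀ i < σ.length, ∀ x ∈ S, mval σ i k ≠ mval σ i x
  val_cases : ∀ y ∈ S, ∀ ψ ∈ T, ∀ i < σ.length,
    mval σ i (v y ψ) = mval σ i k ∨ mval σ i (v y ψ) = mval σ i y
  val_eq_iff : ∀ y ∈ S, ∀ ψ ∈ T, ∀ i < σ.length,
    mval σ i (v y ψ) = mval σ i y ↔ LRVSat σ ψ i

theorem lrvSat_trTopFull_zero {σ : LRVModel} (hσ : σ ≠ []) {k : ℕ} {v : ℕ → LRV → ℕ} {φ : LRV} :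
    LRVSat σ (trTopFull k v φ) 0 ↔
      LRVSat σ (trTop v φ) 0 ∧ TestEncoding σ k v φ.vars φ.tests := by
  simp only [trTopFull, LRVSat, lrvSat_constF_zero, lrvSat_lrvBigAnd_valTop_zero hσ,
    lrvSat_valTop_zero]
  refine and_congr_right fun _ => ⟨fun ⟨⟨hc, hne⟩, hval⟩ => ⟨hc, hne, ?_, ?_⟩, ?_⟩
  · exact fun y hy ψ hψ i hi => (hval y hy ψ hψ i hi).1
  · exact fun y hy ψ hψ i hi => (hval y hy ψ hψ i hi).2
  · exact fun h => ⟨⟨h.const, h.ne_vars⟩,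
      fun y hy ψ hψ i hi => ⟨h.val_cases y hy ψ hψ i hi, h.val_eq_iff y hy ψ hψ i hi⟩⟩

theorem TestEncoding.lrvSat_trTop_iff {σ : LRVModel} {k : ℕ} {v : ℕ → LRV → ℕ} {S : Finset ℕ}
    {T : List LRV} (henc : TestEncoding σ k v S T) {χ : LRV} (hS : χ.vars ⊆ S)
    (hT : χ.tests ⊆ T) (hχ : χ.futNeqFree) (i : ℕ) :
    LRVSat σ (trTop v χ) i ↔ LRVSat σ χ i := by
  induction χ generalizing i with
  | eqX => rfl
  | futEq x y ψ =>
    have hx : x ∈ S := hS (by simp [LRV.vars])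
    have hy : y ∈ S := hS (by simp [LRV.vars])
    have hψ : ψ ∈ T := hT (by simp [LRV.tests])
    simp only [trTop, LRVSat, lrvSat_top]
    refine exists_congr fun j => and_congr_right fun hij => and_congr_right fun hj => ?_
    rw [← henc.val_eq_iff y hy ψ hψ j hj]
    constructor
    · rintro ⟨hxv, -⟩
      have hi : i < σ.length := hij.trans hj
      have hvy : mval σ j (v y ψ) = mval σ j y := by
        refine (henc.val_cases y hy ψ hψ j hj).resolve_left fun hvk => henc.ne_vars i hi x hx ?_
        rw [henc.const i hi, ← henc.const j hj, ← hvk, hxv]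
      exact ⟨hxv.trans hvy, hvy⟩
    · rintro ⟨hxy, hv⟩
      exact ⟨hxy.trans hv.symm, hj⟩
  | futNeq => exact hχ.elim
  | not a ih | next a ih | prev a ih => simp only [trTop, LRVSat, ih hS hT hχ]
  | and a b iha ihb | untl a b iha ihb | sinc a b iha ihb =>
    simp only [LRV.vars, Finset.union_subset_iff, LRV.tests, List.append_subset] at hS hT
    simp only [trTop, LRVSat, iha hS.1 hT.1 hχ.1, ihb hS.2 hT.2 hχ.2]

theorem exists_forall_mval_ne (σ : LRVModel) (S : Finset ℕ) :
    ∃ C, ∀ i < σ.length, ∀ x ∈ S, mval σ i x ≠ C := by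
  obtain ⟨C, hC⟩ := Infinite.exists_notMem_finset
    ((Finset.range σ.length ×ˢ S).image fun p => mval σ p.1 p.2)
  exact ⟨C, fun i hi x hx h => hC (Finset.mem_image.mpr ⟨(i, x), by simp [hi, hx], h⟩)⟩

theorem mval_map_range (g : ℕ → ℕ → ℕ) {i n : ℕ} (hi : i < n) :
    mval ((List.range n).map g) i = g i := by
  simp [mval, List.getD_eq_getElem?_getD, List.getElem?_range hi]

instance : Inhabited LRV := ⟨.top⟩

open Classical in
/-- `σ` with `k ↦ C` and, for `(y, ψ) ∈ P`, `v y ψ ↦ σ(y)` where `ψ` holds and `v y ψ ↦ C`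
elsewhere. -/
noncomputable def extendModel (σ : LRVModel) (k : ℕ) (v : ℕ → LRV → ℕ) (P : Set (ℕ × LRV))
    (C : ℕ) : LRVModel :=
  (List.range σ.length).map fun i x =>
    if x = k then C
    else if x ∈ Function.uncurry v '' P then
      if LRVSat σ (Function.invFunOn (Function.uncurry v) P x).2 i
      then mval σ i (Function.invFunOn (Function.uncurry v) P x).1 else C
    else mval σ i x

section ExtendModel

variable {σ : LRVModel} {k : ℕ} {v : ℕ → LRV → ℕ} {P : Set (ℕ × LRV)} {C i : ℕ}

@[simp]
theorem length_extendModel : (extendModel σ k v P C).length = σ.length := by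
  simp [extendModel]

theorem mval_extendModel_self (hi : i < σ.length) : mval (extendModel σ k v P C) i k = C := by
  simp [extendModel, mval_map_range _ hi]

theorem mval_extendModel_of_notMem {x : ℕ} (hi : i < σ.length) (hxk : x ≠ k)
    (hxP : x ∉ Function.uncurry v '' P) : mval (extendModel σ k v P C) i x = mval σ i x := by
  simp [extendModel, mval_map_range _ hi, hxk, hxP]

open Classical in
theorem mval_extendModel_of_mem (hi : i < σ.length) (hinj : Set.InjOn (Function.uncurry v) P)
    {p : ℕ × LRV} (hp : p ∈ P) (hpk : v p.1 p.2 ≠ k) :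
    mval (extendModel σ k v P C) i (v p.1 p.2) = if LRVSat σ p.2 i then mval σ i p.1 else C := by
  have hpp : Function.invFunOn (Function.uncurry v) P (v p.1 p.2) = p := hinj.leftInvOn_invFunOn hp
  have hmem : v p.1 p.2 ∈ Function.uncurry v '' P := ⟨p, hp, rfl⟩
  simp only [extendModel, mval_map_range _ hi, if_neg hpk, if_pos hmem, hpp]

theorem lrvSat_extendModel_iff {χ : LRV} (hk : k ∉ χ.vars) (hP : ∀ p ∈ P, v p.1 p.2 ∉ χ.vars)
    (i : ℕ) : LRVSat (extendModel σ k v P C) χ i ↔ LRVSat σ χ i :=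
  lrvSat_congr length_extendModel.symm (fun i hi x hx =>
    (mval_extendModel_of_notMem (by simpa using hi) (ne_of_mem_of_not_mem hx hk)
      (by rintro ⟨p, hp, rfl⟩; exact hP p hp hx)).symm) i |>.symm

end ExtendModel

open Classical in
theorem testEncoding_extendModel {σ : LRVModel} {φ : LRV} {k : ℕ} {v : ℕ → LRV → ℕ} {C : ℕ}
    (hC : ∀ i < σ.length, ∀ x ∈ φ.vars, mval σ i x ≠ C) (hk : k ∉ φ.vars)
    (hv : ∀ y ∈ φ.vars, ∀ ψ ∈ φ.tests, v y ψ ∉ φ.vars ∧ v y ψ ≠ k)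
    (hinj : Set.InjOn (Function.uncurry v) (↑φ.vars ×ˢ {ψ | ψ ∈ φ.tests})) :
    TestEncoding (extendModel σ k v (↑φ.vars ×ˢ {ψ | ψ ∈ φ.tests}) C) k v φ.vars φ.tests := by
  set σ' := extendModel σ k v (↑φ.vars ×ˢ {ψ | ψ ∈ φ.tests}) C
  have hvars : ∀ i < σ.length, ∀ x ∈ φ.vars, mval σ' i x = mval σ i x :=
    fun i hi x hx => mval_extendModel_of_notMem hi (ne_of_mem_of_not_mem hx hk)
      (by rintro ⟨p, hp, rfl⟩; exact (hv p.1 hp.1 p.2 hp.2).1 hx)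
  have htests : ∀ ψ ∈ φ.tests, ∀ i, LRVSat σ' ψ i ↔ LRVSat σ ψ i :=
    fun ψ hψ => lrvSat_extendModel_iff (fun h => hk (LRV.vars_subset_of_mem_tests hψ h))
      (fun p hp h => (hv p.1 hp.1 p.2 hp.2).1 (LRV.vars_subset_of_mem_tests hψ h))
  have hval : ∀ y ∈ φ.vars, ∀ ψ ∈ φ.tests, ∀ i < σ.length,
      mval σ' i (v y ψ) = if LRVSat σ ψ i then mval σ i y else C :=
    fun y hy ψ hψ i hi => mval_extendModel_of_mem (p := (y, ψ)) hi hinj ⟨hy, hψ⟩ (hv y hy ψ hψ).2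
  refine ⟨?_, ?_, ?_, ?_⟩ <;> simp only [σ', length_extendModel]
  · intro i hi
    rw [mval_extendModel_self hi, mval_extendModel_self (Nat.zero_lt_of_lt hi)]
  · intro i hi x hx
    rw [mval_extendModel_self hi, hvars i hi x hx]
    exact (hC i hi x hx).symm
  · intro y hy ψ hψ i hi
    rw [hval y hy ψ hψ i hi, mval_extendModel_self hi, hvars i hi y hy]
    split_ifs <;> simp
  · intro y hy ψ hψ i hi
    rw [hval y hy ψ hψ i hi, hvars i hi y hy, htests ψ hψ]
    split_ifs with h
    · simpa using h
    · simpa [h] using (hC i hi y hy).symm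

/-- Let φ be an LRV formula with no `⟨· ≉ ·? ·⟩` subformula whose tests contain
no obligations, and let `k` and the `v_{y,ψ}` be pairwise distinct fresh variables.  Then φ is
satisfiable iff `φ' = φ^⊤ ∧ const ∧ ⋀_{y,ψ} val_{y,ψ}` is satisfiable; moreover every obligation
of φ' has test ⊤. -/
theorem lrv_elimination_of_tests (φ : LRV) (k : ℕ) (v : ℕ → LRV → ℕ)
    (hNoNeq : φ.futNeqFree)
    (hTests : ∀ ψ ∈ φ.tests, ψ.obligFree)
    (hk : k ∉ φ.vars)
    (hv : ∀ y ∈ φ.vars, ∀ ψ ∈ φ.tests, v y ψ ∉ φ.vars ∧ v y ψ ≠ k)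
    (hvinj : ∀ y ∈ φ.vars, ∀ ψ ∈ φ.tests, ∀ y' ∈ φ.vars, ∀ ψ' ∈ φ.tests,
      v y ψ = v y' ψ' → y = y' ∧ ψ = ψ') :
    (LRVSatisfiable φ ↔ LRVSatisfiable (trTopFull k v φ)) ∧
      (trTopFull k v φ).obligTop := by
  refine ⟨⟨fun ⟨σ, hσ, hφ⟩ => ?_, fun ⟨σ, hσ, hφ'⟩ => ?_⟩, obligTop_trTopFull k v hNoNeq hTests⟩
  · obtain ⟨C, hC⟩ := exists_forall_mval_ne σ φ.vars
    set P : Set (ℕ × LRV) := ↑φ.vars ×ˢ {ψ | ψ ∈ φ.tests}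
    have hinj : Set.InjOn (Function.uncurry v) P :=
      fun p hp q hq h => Prod.ext_iff.mpr (hvinj p.1 hp.1 p.2 hp.2 q.1 hq.1 q.2 hq.2 h)
    have henc := testEncoding_extendModel hC hk hv hinj
    have hσ' : extendModel σ k v P C ≠ [] :=
      List.ne_nil_of_length_pos (by simpa [List.length_pos_iff] using hσ)
    have hφ' : LRVSat (extendModel σ k v P C) φ 0 :=
      (lrvSat_extendModel_iff hk (fun p hp => (hv p.1 hp.1 p.2 hp.2).1) 0).mpr hφ
    exact ⟨_, hσ', (lrvSat_trTopFull_zero hσ').mpr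
      ⟨(henc.lrvSat_trTop_iff subset_rfl (List.Subset.refl _) hNoNeq 0).mpr hφ', henc⟩⟩
  · obtain ⟨htr, henc⟩ := (lrvSat_trTopFull_zero hσ).mp hφ'
    exact ⟨σ, hσ, (henc.lrvSat_trTop_iff subset_rfl (List.Subset.refl _) hNoNeq 0).mp htr⟩
end

section
/- Let A = ⟨Q, C, δ⟩ be a VASS satisfying: (closure under component-wise interpolation) for all q, q' ∈ Q, the set {u : (q,u,q') ∈ δ} is either empty or equal to a product ∏_{X ∈ C} [n_X, m_X] of integer intervals; and (optional decrement) whenever δ ∩ ({q} × ℤ^C × {q'}) is non-empty, for every X ∈ C there is (q,u,q') ∈ δ with u(X) ≥ 0. Let A_min be the VASS whose transitions are the (q, minup_{q,q'}, q') for pairs with δ ∩ ({q} × ℤ^C × {q'}) non-empty, where minup_{q,q'}(X) = min{u(X) : (q,u,q') ∈ δ}. If ⟨q_1, v_1⟩ →_gain* ⟨q_2, 0⟩ in A_min and v_1' ≤ v_1 componentwise, then ⟨q_1, v_1'⟩ →* ⟨q_2, 0⟩ in A. -/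
/-- A vector addition system with states (VASS): a finite set of transitions
`δ ⊆ Q × ℤ^C × Q` (the state set `Q` and counter set `C` are required to be
finite types in the theorems below).  Configurations are pairs in `Q × ℕ^C`. -/
structure VASS (Q C : Type) where
  δ : Finset (Q × (C → ℤ) × Q)

/-- Perfect step: `⟨q,v⟩ → ⟨q',v'⟩` iff there is `(q,u,q') ∈ δ` with `v' = v + u`. -/
def VASS.step {Q C : Type} (A : VASS Q C) (p p' : Q × (C → ℕ)) : Prop :=
  ∃ u : C → ℤ, (p.1, u, p'.1) ∈ A.δ ∧ ∀ X : C, (p'.2 X : ℤ) = (p.2 X : ℤ) + u X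

/-- Gainy step: `⟨q,v⟩ →_gain ⟨q',v'⟩` iff there are `(q,u,q') ∈ δ` and `w ∈ ℕ^C`
with `v ≤ w` componentwise and `w + u ≤ v'`. -/
def VASS.gainStep {Q C : Type} (A : VASS Q C) (p p' : Q × (C → ℕ)) : Prop :=
  ∃ u : C → ℤ, ∃ w : C → ℕ, (p.1, u, p'.1) ∈ A.δ ∧
    (∀ X : C, p.2 X ≤ w X) ∧ (∀ X : C, (w X : ℤ) + u X ≤ (p'.2 X : ℤ))

/-- Lossy step: `⟨q,v⟩ →_loss ⟨q',v'⟩` iff there are `(q,u,q') ∈ δ` and `w ∈ ℕ^C`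
with `w ≤ v` componentwise and `v' ≤ w + u`. -/
def VASS.lossStep {Q C : Type} (A : VASS Q C) (p p' : Q × (C → ℕ)) : Prop :=
  ∃ u : C → ℤ, ∃ w : C → ℕ, (p.1, u, p'.1) ∈ A.δ ∧
    (∀ X : C, w X ≤ p.2 X) ∧ (∀ X : C, (p'.2 X : ℤ) ≤ (w X : ℤ) + u X)

/-- Suppose `A` is closed under component-wise interpolation (for each pair of
states, the set of updates between them is empty or a product of integer intervals) and has the
optional-decrement property.  Let `A_min` be as before (each pair of connected states keeps only
the component-wise minimal update).  If `⟨q₁,v₁⟩ →_gain* ⟨q₂,0⟩` in `A_min` and `v₁' ≤ v₁`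
componentwise, then `⟨q₁,v₁'⟩ →* ⟨q₂,0⟩` in `A`. -/
theorem vass_perfect_simulates_min_gainy {Q C : Type} [Finite Q] [Finite C]
    (A Amin : VASS Q C)
    (hinterp : ∀ (q q' : Q) (u : C → ℤ),
      (∀ X : C, ∃ u₁ u₂ : C → ℤ,
        (q, u₁, q') ∈ A.δ ∧ (q, u₂, q') ∈ A.δ ∧ u₁ X ≤ u X ∧ u X ≤ u₂ X) →
      (q, u, q') ∈ A.δ)
    (hopt : ∀ (q q' : Q), (∃ u : C → ℤ, (q, u, q') ∈ A.δ) →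
      ∀ X : C, ∃ u : C → ℤ, (q, u, q') ∈ A.δ ∧ 0 ≤ u X)
    (hmin : ∀ (q : Q) (u : C → ℤ) (q' : Q),
      (q, u, q') ∈ Amin.δ ↔
        ((∃ u₀ : C → ℤ, (q, u₀, q') ∈ A.δ) ∧
          ∀ X : C, IsLeast {z : ℤ | ∃ u₀ : C → ℤ, (q, u₀, q') ∈ A.δ ∧ u₀ X = z} (u X)))
    (q₁ q₂ : Q) (v₁ v₁' : C → ℕ)
    (hgain : Relation.ReflTransGen Amin.gainStep (q₁, v₁) (q₂, fun _ => 0))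
    (hle : ∀ X : C, v₁' X ≤ v₁ X) :
    Relation.ReflTransGen A.step (q₁, v₁') (q₂, fun _ => 0) := by
  suffices h : ∀ p : Q × (C → ℕ), Relation.ReflTransGen Amin.gainStep p (q₂, fun _ => 0) →
      ∀ v' : C → ℕ, (∀ X, v' X ≤ p.2 X) →
      Relation.ReflTransGen A.step (p.1, v') (q₂, fun _ => 0) by
    exact h (q₁, v₁) hgain v₁' hle
  intro p hp
  induction hp using Relation.ReflTransGen.head_induction_on with
  | refl =>
    intro v' hv'
    have : v' = fun _ => 0 := funext fun X => Nat.le_zero.mp (hv' X)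
    subst this
    exact Relation.ReflTransGen.refl
  | head hstep htail ih =>
    rename_i a b
    intro v' hv'
    obtain ⟨u, w₀, hmem, hvw, hwu⟩ := hstep
    rw [hmin] at hmem
    obtain ⟨hex, hleast⟩ := hmem
    set u' : C → ℤ := fun X => max (u X) (-(v' X : ℤ)) with hu'
    have hmemA : (a.1, u', b.1) ∈ A.δ := by
      apply hinterp
      intro X
      obtain ⟨⟨u₀, hu₀, hval⟩, hlb⟩ := hleast X
      by_cases hpos : 0 ≤ u X
      · exact ⟨u₀, u₀, hu₀, hu₀, by simp [hu', hval], by simp [hu', hval]; omega⟩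
      · obtain ⟨u₂, hu₂, hu₂X⟩ := hopt a.1 b.1 hex X
        exact ⟨u₀, u₂, hu₀, hu₂, by simp [hu', hval], by simp [hu']; omega⟩
    set w' : C → ℕ := fun X => ((v' X : ℤ) + u X).toNat with hw'
    have hbound : ∀ X, (v' X : ℤ) + u X ≤ (b.2 X : ℤ) := by
      intro X
      have h1 := hv' X
      have h2 := hvw X
      have h3 := hwu X
      omega
    have hstep1 : A.step (a.1, v') (b.1, w') := by
      refine ⟨u', hmemA, fun X => ?_⟩
      simp only [hw', hu']
      omega
    have hle' : ∀ X, w' X ≤ b.2 X := by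
      intro X
      have := hbound X
      simp only [hw']
      omega
    exact Relation.ReflTransGen.head hstep1 (ih w' hle')
end

section
/- Let A = ⟨Q, C, δ⟩ be a VASS and q, q' ∈ Q. Then ⟨q, 0⟩ →_loss* ⟨q', 0⟩ if and only if there exists a counter valuation v ∈ ℕ^C with ⟨q, 0⟩ →* ⟨q', v⟩. -/
/-- `⟨q,0⟩ →_loss* ⟨q',0⟩` iff there is a counter valuation `v ∈ ℕ^C` with
`⟨q,0⟩ →* ⟨q',v⟩`. -/
theorem vass_lossy_to_zero_iff_control_state_reach {Q C : Type} [Finite Q] [Finite C]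
    (A : VASS Q C) (q q' : Q) :
    Relation.ReflTransGen A.lossStep (q, fun _ => 0) (q', fun _ => 0) ↔
      ∃ v : C → ℕ, Relation.ReflTransGen A.step (q, fun _ => 0) (q', v) := by
  constructor
  · intro h
    suffices H : ∀ a b : Q × (C → ℕ), Relation.ReflTransGen A.lossStep a b →
        ∀ v : C → ℕ, (∀ X, a.2 X ≤ v X) →
        ∃ v' : C → ℕ, (∀ X, b.2 X ≤ v' X) ∧
          Relation.ReflTransGen A.step (a.1, v) (b.1, v') by
      obtain ⟨v', _, hr⟩ := H _ _ h (fun _ => 0) (fun X => le_refl 0)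
      exact ⟨v', hr⟩
    intro a b hab
    induction hab using Relation.ReflTransGen.head_induction_on with
    | refl => intro v hv; exact ⟨v, hv, Relation.ReflTransGen.refl⟩
    | head hstep _ IH =>
      rename_i a c _
      intro v hv
      obtain ⟨u, w, hδ, hw, hle⟩ := hstep
      set v₁ : C → ℕ := fun X => (v X + u X).toNat with hv₁
      have hcast : ∀ X, (v₁ X : ℤ) = v X + u X := by
        intro X
        have h1 : (0 : ℤ) ≤ (v X : ℤ) + u X := by
          have := hle X
          have h2 : (w X : ℤ) ≤ v X := by
            exact_mod_cast le_trans (hw X) (hv X)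
          have : (0:ℤ) ≤ (c.2 X : ℤ) := Int.natCast_nonneg _
          linarith
        simp [hv₁, Int.toNat_of_nonneg h1]
      have hc : ∀ X, c.2 X ≤ v₁ X := by
        intro X
        have h2 : (w X : ℤ) ≤ v X := by
          exact_mod_cast le_trans (hw X) (hv X)
        have := hle X
        have : (c.2 X : ℤ) ≤ (v₁ X : ℤ) := by rw [hcast X]; linarith
        exact_mod_cast this
      obtain ⟨v', hv', hr⟩ := IH v₁ hc
      exact ⟨v', hv', Relation.ReflTransGen.head (b := (c.1, v₁)) ⟨u, hδ, hcast⟩ hr⟩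
  · rintro ⟨v, h⟩
    suffices H : ∀ b : Q × (C → ℕ),
        Relation.ReflTransGen A.step ((q, fun _ => 0) : Q × (C → ℕ)) b →
        ∀ r : C → ℕ, (∀ X, r X ≤ b.2 X) →
        Relation.ReflTransGen A.lossStep (q, fun _ => 0) (b.1, r) by
      exact H _ h (fun _ => 0) (fun X => Nat.zero_le _)
    intro b hb
    induction hb with
    | refl =>
      intro r hr
      have : r = fun _ => (0:ℕ) := funext fun X => Nat.le_zero.mp (hr X)
      rw [this]
    | tail hmb hstep IH =>
      rename_i m c
      intro r hr
      obtain ⟨u, hδ, heq⟩ := hstep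
      have hloss : A.lossStep m (c.1, r) := by
        refine ⟨u, m.2, hδ, fun X => le_refl _, fun X => ?_⟩
        have := heq X
        have h1 : (r X : ℤ) ≤ (c.2 X : ℤ) := by exact_mod_cast hr X
        linarith
      have := IH m.2 (fun X => le_refl _)
      rw [Prod.mk.eta] at this
      exact Relation.ReflTransGen.tail this hloss
end

section
/- For every model σ, every position 0 ≤ i < |σ| and all variables x, y: there exists j with i < j < |σ| and σ(i)(x) ≠ σ(j)(y) if and only if σ,i ⊨ (x ≉ X y) ∨ X((y ≈ X y) U (y ≉ X y)). That is, the formula (x ≉ X y) ∨ X((y ≈ X y) U (y ≉ X y)) has exactly the semantics of the future obligation ⟨x ≉ y? ⊤⟩. -/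
private lemma lrv_const_of_steps (f : ℕ → ℕ) (a k : ℕ)
    (h : ∀ l, a ≤ l → l < k → f l = f (l+1)) :
    ∀ l, a ≤ l → l ≤ k → f l = f a := by
  intro l hal hlk
  obtain ⟨d, rfl⟩ := Nat.exists_eq_add_of_le hal
  induction d with
  | zero => rfl
  | succ d ih =>
    have h1 : f (a + d) = f a := ih (by omega) (by omega)
    have h2 : f (a + d) = f (a + d + 1) := h (a + d) (by omega) (by omega)
    have : a + (d + 1) = a + d + 1 := by omega
    rw [this, ← h2, h1]

private lemma lrv_chg (f : ℕ → ℕ) (a b : ℕ) (hab : a ≤ b) (hne : f a ≠ f b) :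
    ∃ k, a ≤ k ∧ k < b ∧ f k ≠ f (k+1) ∧ ∀ l, a ≤ l → l ≤ k → f l = f a := by
  classical
  have hex : ∃ k, a ≤ k ∧ k < b ∧ f k ≠ f (k+1) := by
    by_contra h
    push_neg at h
    exact hne (lrv_const_of_steps f a b h b hab le_rfl).symm
  obtain ⟨h1, h2, h3⟩ := Nat.find_spec hex
  refine ⟨Nat.find hex, h1, h2, h3, lrv_const_of_steps f a _ ?_⟩
  intro l hl1 hl2
  have hmin := Nat.find_min hex hl2
  push_neg at hmin
  exact hmin hl1 (by omega)

/-- The formula `(x ≉ X y) ∨ X((y ≈ X y) U (y ≉ X y))` has exactly the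
semantics of the future obligation `⟨x ≉ y? ⊤⟩`. -/
theorem lrv_futNeq_top_definable (σ : LRVModel) (i : ℕ) (hi : i < σ.length) (x y : ℕ) :
    (∃ j, i < j ∧ j < σ.length ∧ mval σ i x ≠ mval σ j y) ↔
      LRVSat σ (LRV.lor (LRV.neqX x 1 y)
        (.next (.untl (.eqX y 1 y) (LRV.neqX y 1 y)))) i := by
  classical
  simp only [LRVSat, LRV.lor, LRV.neqX, LRV.nextn, LRV.top]
  constructor
  · rintro ⟨j, hij, hjlen, hne⟩
    rintro ⟨hA, hB⟩
    by_cases hc : mval σ i x = mval σ (i+1) y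
    · have hij1 : i + 1 < j := by
        rcases Nat.lt_or_ge (i+1) j with h | h
        · exact h
        · exfalso; have hj : j = i + 1 := by omega
          exact hne (hj ▸ hc)
      have hne' : mval σ (i+1) y ≠ mval σ j y := fun h => hne (hc.trans h)
      obtain ⟨k, hk1, hk2, hk3, hk4⟩ := lrv_chg (fun n => mval σ n y) (i+1) j (by omega) hne'
      apply hB
      refine ⟨by omega, k, hk1, by omega, ⟨fun h => hk3 h.2, by omega, by omega, trivial⟩, ?_⟩
      intro l hl1 hl2
      refine ⟨by omega, ?_⟩
      have e1 := hk4 l hl1 (by omega)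
      have e2 := hk4 (l+1) (by omega) (by omega)
      rw [e1, e2]
    · exact hA ⟨fun h => hc h.2, by omega, by omega, trivial⟩
  · intro h
    rcases or_iff_not_and_not.mpr h with hφ | hψ
    · exact ⟨i+1, by omega, hφ.2.1, fun he => hφ.1 ⟨hφ.2.1, he⟩⟩
    · obtain ⟨hlen, j', hj1, hj2, ⟨hne', hj3, -⟩, hconst⟩ := hψ
      by_cases hc : mval σ i x = mval σ (i+1) y
      · have key : mval σ j' y = mval σ (i+1) y :=
          lrv_const_of_steps (fun n => mval σ n y) (i+1) j'
            (fun l hl1 hl2 => (hconst l hl1 hl2).2) j' hj1 le_rfl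
        refine ⟨j'+1, by omega, hj3, ?_⟩
        rw [hc, ← key]
        exact fun he => hne' ⟨hj3, he⟩
      · exact ⟨i+1, by omega, hlen, hc⟩
end

section
/- For every model σ, every position 0 ≤ i < |σ| and all variables x, y: there exists j with 0 ≤ j < i and σ(i)(x) ≠ σ(j)(y) if and only if σ,i ⊨ (x ≉ X⁻¹ y) ∨ X⁻¹((y ≈ X⁻¹ y) S (y ≉ X⁻¹ y)). That is, this formula has exactly the semantics of the past obligation ⟨x ≉ y? ⊤⟩⁻¹. -/
/-- `x ≈ X⁻¹ y`, which abbreviates `X⁻¹(y ≈ X x)`. -/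
def LRV.eqPrev (x y : ℕ) : LRV := .prev (.eqX y 1 x)

/-- `x ≉ X⁻¹ y`, which abbreviates `¬(x ≈ X⁻¹ y) ∧ X⁻¹⊤`. -/
def LRV.neqPrev (x y : ℕ) : LRV := .and (.not (LRV.eqPrev x y)) (.prev LRV.top)

lemma lrv_lastChange (f : ℕ → ℕ) : ∀ m j, j ≤ m → f j ≠ f m →
    ∃ k, 0 < k ∧ k ≤ m ∧ f (k - 1) ≠ f k ∧ ∀ l, k < l → l ≤ m → f (l - 1) = f l := by
  intro m
  induction m with
  | zero => intro j hj hne; interval_cases j; exact absurd rfl hne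
  | succ m ih =>
    intro j hj hne
    by_cases h : f m = f (m + 1)
    · have hj' : j ≤ m := by
        rcases Nat.lt_succ_iff_lt_or_eq.mp (Nat.lt_succ_of_le hj) with h' | h'
        · omega
        · exact absurd (h' ▸ rfl) hne
      obtain ⟨k, hk0, hkm, hkne, hkall⟩ := ih j hj' (fun he => hne (he.trans h))
      refine ⟨k, hk0, hkm.trans (Nat.le_succ m), hkne, fun l hl1 hl2 => ?_⟩
      rcases Nat.lt_succ_iff_lt_or_eq.mp (Nat.lt_succ_of_le hl2) with h' | h'
      · exact hkall l hl1 (by omega)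
      · subst h'; simpa using h
    · exact ⟨m + 1, Nat.succ_pos m, le_refl _, by simpa using h,
        fun l hl1 hl2 => by omega⟩

/-- The formula `(x ≉ X⁻¹ y) ∨ X⁻¹((y ≈ X⁻¹ y) S (y ≉ X⁻¹ y))` has exactly the
semantics of the past obligation `⟨x ≉ y? ⊤⟩⁻¹`. -/
theorem lrv_pastNeq_top_definable (σ : LRVModel) (i : ℕ) (hi : i < σ.length) (x y : ℕ) :
    (∃ j, j < i ∧ mval σ i x ≠ mval σ j y) ↔
      LRVSat σ (LRV.lor (LRV.neqPrev x y)
        (.prev (.sinc (LRV.eqPrev y y) (LRV.neqPrev y y)))) i := by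
  classical
  have hR : LRVSat σ (LRV.lor (LRV.neqPrev x y)
        (.prev (.sinc (LRV.eqPrev y y) (LRV.neqPrev y y)))) i ↔
      ((0 < i ∧ mval σ (i - 1) y ≠ mval σ i x) ∨
       (0 < i ∧ ∃ k, 0 < k ∧ k ≤ i - 1 ∧ mval σ (k - 1) y ≠ mval σ k y ∧
          ∀ l, k < l → l ≤ i - 1 → mval σ (l - 1) y = mval σ l y)) := by
    simp only [LRVSat, LRV.lor, LRV.neqPrev, LRV.eqPrev, LRV.top]
    constructor
    · intro h
      rcases not_and_or.mp h with h | h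
      · left
        have hA := not_not.mp h
        obtain ⟨h1, h2, _, _⟩ := hA
        refine ⟨h2, fun he => h1 ⟨h2, by omega, by rwa [show i - 1 + 1 = i by omega]⟩⟩
      · right
        obtain ⟨h0, k, hk, ⟨hk1, hk2, _, _⟩, hall⟩ := not_not.mp h
        refine ⟨h0, k, hk2, hk, fun he => hk1 ⟨hk2, by omega,
          by rwa [show k - 1 + 1 = k by omega]⟩, fun l hl1 hl2 => ?_⟩
        have := (hall l hl1 hl2).2.2
        rwa [show l - 1 + 1 = l by omega] at this
    · rintro (⟨h0, hne⟩ | ⟨h0, k, hk0, hki, hkne, hall⟩) ⟨h1, h2⟩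
      · exact h1 ⟨fun ⟨_, _, he⟩ => hne (by rwa [show i - 1 + 1 = i by omega] at he),
          h0, by omega, rfl⟩
      · refine h2 ⟨h0, k, hki, ⟨fun ⟨_, _, he⟩ =>
          hkne (by rwa [show k - 1 + 1 = k by omega] at he), hk0, by omega, rfl⟩,
          fun l hl1 hl2 => ⟨by omega, by omega,
            by rw [show l - 1 + 1 = l by omega]; exact hall l hl1 hl2⟩⟩
  rw [hR]
  constructor
  · rintro ⟨j, hj, hne⟩
    have h0 : 0 < i := by omega
    by_cases hlast : mval σ (i - 1) y = mval σ i x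
    · right
      refine ⟨h0, ?_⟩
      have hne' : mval σ j y ≠ mval σ (i - 1) y := fun he => hne (by rw [he, hlast])
      exact lrv_lastChange (fun n => mval σ n y) (i - 1) j (by omega) hne'
    · exact Or.inl ⟨h0, hlast⟩
  · rintro (⟨h0, hne⟩ | ⟨h0, k, hk0, hki, hkne, hall⟩)
    · exact ⟨i - 1, by omega, fun he => hne he.symm⟩
    · have hconst : ∀ l, k ≤ l → l ≤ i - 1 → mval σ k y = mval σ l y := by
        intro l hl1 hl2
        induction l with
        | zero => omega
        | succ m ihm =>
          rcases Nat.lt_or_ge k (m + 1) with h | h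
          · have := hall (m + 1) h hl2
            simp only [Nat.add_sub_cancel] at this
            rw [← this]
            exact ihm (by omega) (by omega)
          · have hkm : k = m + 1 := by omega
            rw [hkm]
      by_cases hx : mval σ i x = mval σ (k - 1) y
      · refine ⟨k, by omega, fun he => hkne ?_⟩
        rw [← hx, he]
      · exact ⟨k - 1, by omega, hx⟩
end
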